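/- arXiv:1201.3600 — 4 statements merged into one kernel-verified Lean document; each statement's English description precedes it below -/
import Mathlib

section
/- If dim V = 2n, then g has signature (n, n): there exist subspaces V₊ and V₋ of V with V = V₊ ⊕ V₋, dim V₊ = dim V₋ = n, g(V₊, V₋) = 0, g positive definite on V₊, and g negative definite on V₋. -/
/-!
Diagonalising `g` in an orthogonal basis splits `V = V₊ ⊕ V₋` with `g` positive definite on `V₊`
and negative definite on `V₋`; then `dim V₊` is the largest dimension of a subspace on which `g`
is positive definite, and likewise for `V₋`. Since `g (J x) (J x) = -g x x` and `J` is injective,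
`J` carries `V₊` onto a negative definite subspace and `V₋` onto a positive definite one, so
`dim V₊ ≤ dim V₋ ≤ dim V₊`.
-/

open Module Submodule

namespace LinearMap.BilinForm

variable {K V : Type*} [Field K] [LinearOrder K] [AddCommGroup V] [Module K V]

def IsPosDefOn (g : LinearMap.BilinForm K V) (W : Submodule K V) : Prop :=
  ∀ x ∈ W, x ≠ 0 → 0 < g x x

variable {g : LinearMap.BilinForm K V}

theorem IsPosDefOn.map_neg {W : Submodule K V} {J : V →ₗ[K] V}
    (hgJ : ∀ x, g (J x) (J x) = -g x x) (hW : g.IsPosDefOn W) : (-g).IsPosDefOn (W.map J) := by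
  rintro _ ⟨x, hx, rfl⟩ hJx
  have hx0 : x ≠ 0 := fun h => hJx (by rw [h, map_zero])
  simpa only [neg_apply, hgJ, neg_neg] using hW x hx hx0

variable [IsStrictOrderedRing K]

theorem isPosDefOn_neg_iff {W : Submodule K V} :
    (-g).IsPosDefOn W ↔ ∀ x ∈ W, x ≠ 0 → g x x < 0 := by
  simp only [IsPosDefOn, neg_apply, neg_pos]

theorem IsPosDefOn.disjoint {P N : Submodule K V} (hP : g.IsPosDefOn P)
    (hN : (-g).IsPosDefOn N) : Disjoint P N := by
  refine disjoint_def.2 fun x hxP hxN => ?_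
  by_contra hx
  exact (hP x hxP hx).not_gt (isPosDefOn_neg_iff.1 hN x hxN hx)

section FiniteDimensional

variable [FiniteDimensional K V] {P N : Submodule K V}

theorem IsPosDefOn.finrank_le {W : Submodule K V} (hW : g.IsPosDefOn W) (hPN : IsCompl P N)
    (hN : (-g).IsPosDefOn N) : finrank K W ≤ finrank K P := by
  have hWN := finrank_add_finrank_le_of_disjoint (hW.disjoint hN)
  have hPN := finrank_add_eq_of_isCompl hPN
  omega

theorem finrank_eq_finrank_of_antiIsometry (hPN : IsCompl P N) (hP : g.IsPosDefOn P)
    (hN : (-g).IsPosDefOn N) {J : V →ₗ[K] V} (hJ : Function.Injective J)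
    (hgJ : ∀ x, g (J x) (J x) = -g x x) : finrank K P = finrank K N := by
  have hfinrank_map (W : Submodule K V) : finrank K (W.map J) = finrank K W :=
    (equivMapOfInjective J hJ W).finrank_eq.symm
  -- `rw [neg_neg]` does not match through the `Neg` instance of `BilinForm`
  have hg : -(-g) = g := neg_neg g
  have hP' : (-(-g)).IsPosDefOn P := by rwa [hg]
  have hgJ' : ∀ x, (-g) (J x) (J x) = -(-g) x x := fun x => by rw [neg_apply, neg_apply, hgJ]
  have hNJ : g.IsPosDefOn (N.map J) := by simpa only [hg] using hN.map_neg hgJ'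
  apply le_antisymm
  · rw [← hfinrank_map P]
    exact (hP.map_neg hgJ).finrank_le hPN.symm hP'
  · rw [← hfinrank_map N]
    exact hNJ.finrank_le hPN hN

end FiniteDimensional

section OrthogonalBasis

variable {ι : Type*} [Fintype ι] {b : Basis ι K V}

theorem _root_.LinearMap.IsOrthoᵢ.apply_eq_sum (hb : g.IsOrthoᵢ b) (x y : V) :
    g x y = ∑ i, b.repr x i * b.repr y i * g (b i) (b i) := by
  conv_lhs => rw [← b.sum_repr x, ← b.sum_repr y]
  simp only [map_sum, map_smul, LinearMap.coe_sum, Finset.sum_apply,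
    LinearMap.smul_apply, smul_eq_mul]
  refine Finset.sum_congr rfl fun j _ => ?_
  rw [Finset.sum_eq_single j (fun i _ hij => by rw [hb hij, mul_zero]) (by simp)]
  ring

theorem _root_.LinearMap.IsOrthoᵢ.apply_eq_zero_of_mem_span_image (hb : g.IsOrthoᵢ b)
    {s t : Set ι} (hst : Disjoint s t) {x y : V} (hx : x ∈ span K (b '' s))
    (hy : y ∈ span K (b '' t)) : g x y = 0 := by
  rw [Basis.mem_span_image] at hx hy
  rw [hb.apply_eq_sum]
  refine Finset.sum_eq_zero fun i _ => ?_
  by_cases hxi : b.repr x i = 0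
  · rw [hxi, zero_mul, zero_mul]
  by_cases hyi : b.repr y i = 0
  · rw [hyi, mul_zero, zero_mul]
  exact absurd (hy (Finsupp.mem_support_iff.2 hyi))
    (Set.disjoint_left.1 hst (hx (Finsupp.mem_support_iff.2 hxi)))

theorem _root_.LinearMap.IsOrthoᵢ.isPosDefOn_span_image (hb : g.IsOrthoᵢ b) {s : Set ι}
    (hs : ∀ i ∈ s, 0 < g (b i) (b i)) : g.IsPosDefOn (span K (b '' s)) := by
  intro x hx hx0
  rw [Basis.mem_span_image] at hx
  have hsupp : ∀ i, b.repr x i ≠ 0 → 0 < g (b i) (b i) :=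
    fun i hi => hs i (hx (Finsupp.mem_support_iff.2 hi))
  obtain ⟨i, hi⟩ : ∃ i, b.repr x i ≠ 0 := by
    by_contra! h
    exact hx0 (b.repr.map_eq_zero_iff.1 (Finsupp.ext h))
  rw [hb.apply_eq_sum]
  refine Finset.sum_pos' (fun j _ => ?_) ⟨i, Finset.mem_univ i, ?_⟩
  · by_cases hj : b.repr x j = 0
    · rw [hj, zero_mul, zero_mul]
    · exact (mul_pos (mul_self_pos.2 hj) (hsupp j hj)).le
  · exact mul_pos (mul_self_pos.2 hi) (hsupp i hi)

end OrthogonalBasis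

theorem exists_isCompl_isPosDefOn_isPosDefOn_neg [FiniteDimensional K V]
    (hg : LinearMap.IsSymm g) (hnd : g.SeparatingLeft) :
    ∃ P N : Submodule K V, IsCompl P N ∧ (∀ x ∈ P, ∀ y ∈ N, g x y = 0) ∧
      g.IsPosDefOn P ∧ (-g).IsPosDefOn N := by
  have : Invertible (2 : K) := invertibleOfNonzero two_ne_zero
  obtain ⟨b, hb⟩ := exists_orthogonal_basis hg
  have hb_neg : (-g).IsOrthoᵢ b := fun i j hij => neg_eq_zero.2 (hb hij)
  set S : Set (Fin (finrank K V)) := {i | 0 < g (b i) (b i)}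
  refine ⟨span K (b '' S), span K (b '' Sᶜ),
    b.linearIndependent.isCompl_span_image b.span_eq isCompl_compl,
    fun x hx y hy => hb.apply_eq_zero_of_mem_span_image disjoint_compl_right hx hy,
    hb.isPosDefOn_span_image fun i hi => hi,
    hb_neg.isPosDefOn_span_image fun i hi => ?_⟩
  rw [neg_apply, neg_pos]
  exact (not_lt.1 hi).lt_of_ne (hb.not_isOrtho_basis_self_of_separatingLeft hnd i)

end LinearMap.BilinForm

open LinearMap.BilinForm in
/-- A Norden metric on a `2n`-dimensional real vector space has
signature `(n, n)`: there are complementary subspaces `V₊`, `V₋` of dimension `n`,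
`g`-orthogonal to each other, on which `g` is positive (resp. negative) definite. -/
theorem norden_metric_signature
    (V : Type*) [AddCommGroup V] [Module ℝ V] [FiniteDimensional ℝ V]
    (J : V →ₗ[ℝ] V) (hJ : ∀ x, J (J x) = -x)
    (g : V →ₗ[ℝ] V →ₗ[ℝ] ℝ)
    (hsymm : ∀ x y, g x y = g y x)
    (hnd : ∀ x, (∀ y, g x y = 0) → x = 0)
    (hN : ∀ x y, g (J x) (J y) = -g x y)
    (n : ℕ) (hdim : Module.finrank ℝ V = 2 * n) :
    ∃ Vp Vm : Submodule ℝ V,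
      Vp ⊓ Vm = ⊥ ∧ Vp ⊔ Vm = ⊤ ∧
      Module.finrank ℝ Vp = n ∧ Module.finrank ℝ Vm = n ∧
      (∀ x ∈ Vp, ∀ y ∈ Vm, g x y = 0) ∧
      (∀ x ∈ Vp, x ≠ 0 → 0 < g x x) ∧
      (∀ x ∈ Vm, x ≠ 0 → g x x < 0) := by
  obtain ⟨P, N, hPN, horth, hPpos, hNneg⟩ :=
    exists_isCompl_isPosDefOn_isPosDefOn_neg (LinearMap.isSymm_def.2 fun x y => hsymm x y) hnd
  have hJinj : Function.Injective J := fun x y hxy => by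
    simpa only [hJ, neg_inj] using congrArg J hxy
  have hPN_eq := finrank_eq_finrank_of_antiIsometry hPN hPpos hNneg hJinj fun x => hN x x
  have hsum := finrank_add_eq_of_isCompl hPN
  exact ⟨P, N, hPN.inf_eq_bot, hPN.sup_eq_top, by omega, by omega, horth, hPpos,
    isPosDefOn_neg_iff.1 hNneg⟩
end

section
/- Let W be a subspace of V on which the restriction of g is nondegenerate, so that V = W ⊕ W^{⊥g}, and let P : V → W be the projection onto W along W^{⊥g}. Then the operator T : W → W, T(x) = P(J x), is self-adjoint with respect to both metrics: g(T x, y) = g(x, T y) and g̃(T x, y) = g̃(x, T y) for all x, y ∈ W. -/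
/-!
Because `v - P v` is `g`-orthogonal to `W`, inserting or removing `P` in `g (P v) w` costs
nothing as long as `w ∈ W`; and the Norden condition together with `J² = -1` makes `J`
self-adjoint for `g`. Both identities then follow by moving `J` and `P` across `g`.
-/

/-- For a bilinear form `h` on `V` and a subspace `W`, the `h`-orthogonal space
`W^{⊥h} = {v ∈ V : h(v, w) = 0 for all w ∈ W}`. -/
def perpBilin {V : Type*} [AddCommGroup V] [Module ℝ V]
    (h : V →ₗ[ℝ] V →ₗ[ℝ] ℝ) (W : Submodule ℝ V) : Submodule ℝ V where
  carrier := {v | ∀ w ∈ W, h v w = 0}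
  add_mem' := by
    intro a b ha hb w hw
    simp [ha w hw, hb w hw]
  zero_mem' := by
    intro w hw
    simp
  smul_mem' := by
    intro c a ha w hw
    simp [ha w hw]

open LinearMap

theorem LinearMap.BilinForm.isAdjointPair_self_of_map_map_eq_neg {R M : Type*} [CommRing R]
    [AddCommGroup M] [Module R M] {B : LinearMap.BilinForm R M} {J : M →ₗ[R] M}
    (hJ : ∀ x, J (J x) = -x) (hN : ∀ x y, B (J x) (J y) = -B x y) :
    IsAdjointPair B B J J := by
  intro x y
  have h := hN x (J y)
  rwa [hJ, map_neg, neg_inj] at h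

section Projection

variable {V : Type*} [AddCommGroup V] [Module ℝ V] {g : LinearMap.BilinForm ℝ V}
  {W : Submodule ℝ V}

theorem apply_eq_of_sub_mem_perpBilin {u v w : V} (huv : u - v ∈ perpBilin g W) (hw : w ∈ W) :
    g u w = g v w := by
  have h := huv w hw
  rwa [map_sub, LinearMap.sub_apply, sub_eq_zero] at h

variable {P A : V → V} (hg : BilinForm.IsSymm g) (hA : IsAdjointPair g g A A)
  (hPperp : ∀ v, v - P v ∈ perpBilin g W)
include hg hA hPperp

theorem apply_proj_comp_eq_of_mem {x y : V} (hx : x ∈ W) (hy : y ∈ W) :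
    g (P (A x)) y = g x (P (A y)) :=
  calc g (P (A x)) y = g (A x) y := (apply_eq_of_sub_mem_perpBilin (hPperp _) hy).symm
    _ = g x (A y) := hA x y
    _ = g (A y) x := hg.eq _ _
    _ = g (P (A y)) x := apply_eq_of_sub_mem_perpBilin (hPperp _) hx
    _ = g x (P (A y)) := hg.eq _ _

theorem apply_comp_proj_comp_eq (hPW : ∀ v, P v ∈ W) (x y : V) :
    g (A (P (A x))) y = g (A x) (P (A y)) :=
  calc g (A (P (A x))) y = g (P (A x)) (A y) := hA _ _
    _ = g (A y) (P (A x)) := hg.eq _ _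
    _ = g (P (A y)) (P (A x)) := apply_eq_of_sub_mem_perpBilin (hPperp _) (hPW _)
    _ = g (P (A x)) (P (A y)) := hg.eq _ _
    _ = g (A x) (P (A y)) := (apply_eq_of_sub_mem_perpBilin (hPperp _) (hPW _)).symm

end Projection

theorem tangential_part_self_adjoint_general
    (V : Type*) [AddCommGroup V] [Module ℝ V]
    (J : V →ₗ[ℝ] V) (hJ : ∀ x, J (J x) = -x)
    (g : V →ₗ[ℝ] V →ₗ[ℝ] ℝ)
    (hsymm : ∀ x y, g x y = g y x)
    (hN : ∀ x y, g (J x) (J y) = -g x y)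
    (W : Submodule ℝ V)
    (P : V →ₗ[ℝ] V)
    (hPW : ∀ v, P v ∈ W)
    (hPperp : ∀ v, v - P v ∈ perpBilin g W) :
    ∀ x ∈ W, ∀ y ∈ W,
      g (P (J x)) y = g x (P (J y)) ∧
      g (J (P (J x))) y = g (J x) (P (J y)) := by
  have hg : BilinForm.IsSymm g := ⟨hsymm⟩
  have hJadj : IsAdjointPair g g J J := BilinForm.isAdjointPair_self_of_map_map_eq_neg hJ hN
  intro x hx y hy
  exact ⟨apply_proj_comp_eq_of_mem hg hJadj hPperp hx hy,
    apply_comp_proj_comp_eq hg hJadj hPperp hPW x y⟩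

/-- Let `W` be a subspace on which `g` is nondegenerate, so that
`V = W ⊕ W^{⊥g}`, and let `P : V → W` be the projection onto `W` along `W^{⊥g}`.
Then `T : W → W`, `T x = P (J x)`, is self-adjoint with respect to both `g` and
the associated metric `g̃ = g ∘ J`:
`g(Tx, y) = g(x, Ty)` and `g̃(Tx, y) = g̃(x, Ty)` for all `x, y ∈ W`. -/
theorem tangential_part_self_adjoint
    (V : Type*) [AddCommGroup V] [Module ℝ V] [FiniteDimensional ℝ V]
    (J : V →ₗ[ℝ] V) (hJ : ∀ x, J (J x) = -x)
    (g : V →ₗ[ℝ] V →ₗ[ℝ] ℝ)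
    (hsymm : ∀ x y, g x y = g y x)
    (hnd : ∀ x, (∀ y, g x y = 0) → x = 0)
    (hN : ∀ x y, g (J x) (J y) = -g x y)
    (W : Submodule ℝ V)
    (hWnd : W ⊓ perpBilin g W = ⊥)
    (hWcompl : W ⊔ perpBilin g W = ⊤)
    (P : V →ₗ[ℝ] V)
    (hPW : ∀ v, P v ∈ W)
    (hPid : ∀ w ∈ W, P w = w)
    (hPperp : ∀ v, v - P v ∈ perpBilin g W) :
    ∀ x ∈ W, ∀ y ∈ W,
      g (P (J x)) y = g x (P (J y)) ∧
      g (J (P (J x))) y = g (J x) (P (J y)) :=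
  tangential_part_self_adjoint_general V J hJ g hsymm hN W P hPW hPperp
end

section
/- (Theorem 3.2, forward direction) Let (W, D, D⊥) be a CR datum. Then the radical of W with respect to g̃ equals the totally real distribution: W ∩ W^{⊥g̃} = D⊥. In particular, if dim D⊥ = r ≥ 1 then W is an r-lightlike subspace with respect to g̃. -/
/-
Since `g̃ = g ∘ J`, a vector `v` is `g̃`-orthogonal to `W` exactly when `J v` is `g`-orthogonal
to `W`. Write `v ∈ W` as `x + y` with `x ∈ D`, `y ∈ Dp`. Since `J y ⊥_g W` by assumption on `Dp`, `v ⊥_g̃ W` forces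
`J x ⊥_g W`; but `J x ∈ D ⊆ W` and `g` is nondegenerate on `W`, so `J x = 0`, hence `x = 0`
because `J² = -1`.
-/

lemma LinearMap.injective_of_apply_apply_eq_neg {R M : Type*} [Ring R] [AddCommGroup M]
    [Module R M] {J : M →ₗ[R] M} (hJ : ∀ x, J (J x) = -x) : Function.Injective J := by
  intro x y hxy
  simpa only [hJ, neg_inj] using congrArg J hxy

section perpBilin

variable {V : Type*} [AddCommGroup V] [Module ℝ V]

lemma perpBilin_comp (g : V →ₗ[ℝ] V →ₗ[ℝ] ℝ) (J : V →ₗ[ℝ] V) (W : Submodule ℝ V) :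
    perpBilin (g ∘ₗ J) W = (perpBilin g W).comap J :=
  rfl

lemma le_inf_perpBilin_comp {g : V →ₗ[ℝ] V →ₗ[ℝ] ℝ} {J : V →ₗ[ℝ] V} {W Dp : Submodule ℝ V}
    (hDpW : Dp ≤ W) (hJDp : Dp.map J ≤ perpBilin g W) :
    Dp ≤ W ⊓ perpBilin (g ∘ₗ J) W := by
  rw [perpBilin_comp]
  exact le_inf hDpW (Submodule.map_le_iff_le_comap.mp hJDp)

lemma inf_perpBilin_comp_le {g : V →ₗ[ℝ] V →ₗ[ℝ] ℝ} {J : V →ₗ[ℝ] V}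
    (hJ : Function.Injective J) {W D Dp : Submodule ℝ V} (hsum : D ⊔ Dp = W)
    (hWnd : W ⊓ perpBilin g W = ⊥) (hJD : D.map J ≤ W) (hJDp : Dp.map J ≤ perpBilin g W) :
    W ⊓ perpBilin (g ∘ₗ J) W ≤ Dp := by
  rintro v ⟨hvW, hvperp⟩
  obtain ⟨x, hx, y, hy, rfl⟩ := Submodule.mem_sup.mp (hsum ▸ hvW : v ∈ D ⊔ Dp)
  have hJy : J y ∈ perpBilin g W := hJDp ⟨y, hy, rfl⟩
  have hJx_perp : J x ∈ perpBilin g W := by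
    have hJv : J (x + y) ∈ perpBilin g W := hvperp
    rw [map_add] at hJv
    simpa only [add_sub_cancel_right] using sub_mem hJv hJy
  have hJx : J x = 0 := by
    simpa only [hWnd, Submodule.mem_bot] using
      Submodule.mem_inf.mpr ⟨hJD ⟨x, hx, rfl⟩, hJx_perp⟩
  rw [(injective_iff_map_eq_zero J).mp hJ x hJx, zero_add]
  exact hy

end perpBilin

theorem cr_datum_radical_eq_totally_real_general
    (V : Type*) [AddCommGroup V] [Module ℝ V]
    (J : V →ₗ[ℝ] V) (hJ : ∀ x, J (J x) = -x)
    (g : V →ₗ[ℝ] V →ₗ[ℝ] ℝ)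
    (W D Dp : Submodule ℝ V)
    (hsum : D ⊔ Dp = W)
    (hWnd : W ⊓ perpBilin g W = ⊥)
    (hJD : Submodule.map J D = D)
    (hJDp : Submodule.map J Dp ≤ perpBilin g W) :
    W ⊓ perpBilin (g ∘ₗ J) W = Dp ∧
    (∀ r : ℕ, 1 ≤ r → Module.finrank ℝ Dp = r →
      Module.finrank ℝ ↥(W ⊓ perpBilin (g ∘ₗ J) W) = r) := by
  have hJinj := LinearMap.injective_of_apply_apply_eq_neg hJ
  have hradical : W ⊓ perpBilin (g ∘ₗ J) W = Dp :=
    le_antisymm (inf_perpBilin_comp_le hJinj hsum hWnd (hJD.trans_le (hsum ▸ le_sup_left)) hJDp)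
      (le_inf_perpBilin_comp (hsum ▸ le_sup_right) hJDp)
  exact ⟨hradical, fun r _ hr => hradical ▸ hr⟩

/-- **Theorem 3.2, forward direction.** Let `(W, D, Dp)` be a CR datum
in a Norden vector space `(V, J, g)`: `W = D ⊕ Dp`, `g(D, Dp) = 0`, `g│W`
nondegenerate, `J(D) = D` and `J(Dp) ⊆ W^{⊥g}`.  Then the radical of `W` with
respect to the associated metric `g̃ = g ∘ J` equals `Dp`: `W ∩ W^{⊥g̃} = Dp`.
In particular, if `dim Dp = r ≥ 1`, then `W` is an `r`-lightlike subspace with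
respect to `g̃`. -/
theorem cr_datum_radical_eq_totally_real
    (V : Type*) [AddCommGroup V] [Module ℝ V] [FiniteDimensional ℝ V]
    (J : V →ₗ[ℝ] V) (hJ : ∀ x, J (J x) = -x)
    (g : V →ₗ[ℝ] V →ₗ[ℝ] ℝ)
    (hsymm : ∀ x y, g x y = g y x)
    (hnd : ∀ x, (∀ y, g x y = 0) → x = 0)
    (hN : ∀ x y, g (J x) (J y) = -g x y)
    (W D Dp : Submodule ℝ V)
    (hDW : D ≤ W) (hDpW : Dp ≤ W)
    (hsum : D ⊔ Dp = W) (hint : D ⊓ Dp = ⊥)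
    (horth : ∀ x ∈ D, ∀ y ∈ Dp, g x y = 0)
    (hWnd : W ⊓ perpBilin g W = ⊥)
    (hJD : Submodule.map J D = D)
    (hJDp : Submodule.map J Dp ≤ perpBilin g W) :
    W ⊓ perpBilin (g ∘ₗ J) W = Dp ∧
    (∀ r : ℕ, 1 ≤ r → Module.finrank ℝ Dp = r →
      Module.finrank ℝ ↥(W ⊓ perpBilin (g ∘ₗ J) W) = r) :=
  cr_datum_radical_eq_totally_real_general V J hJ g W D Dp hsum hWnd hJD hJDp
end

section
/- (Theorem 3.2, decomposition of the g̃-normal space) Let (W, D, D⊥) be a CR datum. Then W^{⊥g̃} = D⊥ ⊕ (W^{⊥g} ∩ (J(D⊥))^{⊥g}), this sum is direct, and the two summands are g̃-orthogonal. -/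
/-!
Transposing `J` across `g` turns the `g̃`-orthogonal space of `W = D ⊕ D⊥` into the
`g`-orthogonal space of `J W = D ⊕ J(D⊥)`, which contains `D⊥`. Since `g` is nondegenerate
on `W` and `D ⊥_g D⊥`, it is nondegenerate on `D⊥`, so `V = D⊥ ⊕ (D⊥)^{⊥g}`, and the modular
law splits `(J W)^{⊥g}` along this decomposition.
-/

section perpBilin

variable {V : Type*} [AddCommGroup V] [Module ℝ V] {g : V →ₗ[ℝ] V →ₗ[ℝ] ℝ}

lemma mem_perpBilin {W : Submodule ℝ V} {v : V} :
    v ∈ perpBilin g W ↔ ∀ w ∈ W, g v w = 0 := Iff.rfl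

lemma perpBilin_antitone {A B : Submodule ℝ V} (hAB : A ≤ B) :
    perpBilin g B ≤ perpBilin g A :=
  fun _ hv w hw => hv w (hAB hw)

lemma perpBilin_sup (A B : Submodule ℝ V) :
    perpBilin g (A ⊔ B) = perpBilin g A ⊓ perpBilin g B := by
  refine le_antisymm (le_inf (perpBilin_antitone le_sup_left)
    (perpBilin_antitone le_sup_right)) fun v ⟨hA, hB⟩ w hw => ?_
  obtain ⟨a, ha, b, hb, rfl⟩ := Submodule.mem_sup.mp hw
  rw [map_add, hA a ha, hB b hb, add_zero]

lemma le_perpBilin_comm (hsymm : ∀ x y, g x y = g y x) {A B : Submodule ℝ V} :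
    A ≤ perpBilin g B ↔ B ≤ perpBilin g A :=
  ⟨fun h b hb a ha => hsymm b a ▸ h ha b hb, fun h a ha b hb => hsymm a b ▸ h hb a ha⟩

lemma perpBilin_comp_eq_perpBilin_map {J : V →ₗ[ℝ] V} (hJ : LinearMap.IsAdjointPair g g J J)
    (W : Submodule ℝ V) : perpBilin (g ∘ₗ J) W = perpBilin g (W.map J) := by
  ext v
  simp only [mem_perpBilin, LinearMap.comp_apply, Submodule.mem_map, forall_exists_index,
    and_imp, forall_apply_eq_imp_iff₂, hJ v]

lemma perpBilin_eq_orthogonal (hsymm : ∀ x y, g x y = g y x) (W : Submodule ℝ V) :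
    perpBilin g W = LinearMap.BilinForm.orthogonal g W := by
  ext v
  simp only [mem_perpBilin, LinearMap.BilinForm.mem_orthogonal_iff, hsymm v]

lemma isCompl_perpBilin [FiniteDimensional ℝ V] (hsymm : ∀ x y, g x y = g y x)
    {A : Submodule ℝ V} (hA : A ⊓ perpBilin g A = ⊥) : IsCompl A (perpBilin g A) := by
  rw [perpBilin_eq_orthogonal hsymm] at hA ⊢
  exact (LinearMap.BilinForm.isCompl_orthogonal_iff_disjoint fun x y h => (hsymm x y ▸ h :)).2
    (disjoint_iff.2 hA)

lemma inf_perpBilin_eq_bot_of_le_perpBilin {A B : Submodule ℝ V} (hBA : B ≤ perpBilin g A)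
    (hAB : (A ⊔ B) ⊓ perpBilin g (A ⊔ B) = ⊥) : B ⊓ perpBilin g B = ⊥ := by
  rw [eq_bot_iff, ← hAB, perpBilin_sup]
  exact le_inf (inf_le_left.trans le_sup_right) (inf_le_inf_right _ hBA)

end perpBilin

lemma LinearMap.isAdjointPair_of_anti_isometry {R M : Type*} [CommRing R] [AddCommGroup M]
    [Module R M] {J : M →ₗ[R] M} {g : M →ₗ[R] M →ₗ[R] R} (hJ : ∀ x, J (J x) = -x)
    (hN : ∀ x y, g (J x) (J y) = -g x y) : LinearMap.IsAdjointPair g g J J := fun x y => by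
  simpa [hJ] using hN x (J y)

theorem cr_datum_normal_space_decomposition_general
    (V : Type*) [AddCommGroup V] [Module ℝ V] [FiniteDimensional ℝ V]
    (J : V →ₗ[ℝ] V) (hJ : ∀ x, J (J x) = -x)
    (g : V →ₗ[ℝ] V →ₗ[ℝ] ℝ)
    (hsymm : ∀ x y, g x y = g y x)
    (hN : ∀ x y, g (J x) (J y) = -g x y)
    (W D Dp : Submodule ℝ V)
    (hsum : D ⊔ Dp = W)
    (horth : ∀ x ∈ D, ∀ y ∈ Dp, g x y = 0)
    (hWnd : W ⊓ perpBilin g W = ⊥)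
    (hJD : Submodule.map J D = D)
    (hJDp : Submodule.map J Dp ≤ perpBilin g W) :
    perpBilin (g ∘ₗ J) W
        = Dp ⊔ (perpBilin g W ⊓ perpBilin g (Submodule.map J Dp)) ∧
    Dp ⊓ (perpBilin g W ⊓ perpBilin g (Submodule.map J Dp)) = ⊥ ∧
    (∀ x ∈ Dp, ∀ y ∈ perpBilin g W ⊓ perpBilin g (Submodule.map J Dp),
      g (J x) y = 0 ∧ g (J y) x = 0) := by
  have hadj := LinearMap.isAdjointPair_of_anti_isometry hJ hN
  have hDpD : Dp ≤ perpBilin g D := (le_perpBilin_comm hsymm).1 horth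
  have hDpJDp : Dp ≤ perpBilin g (Dp.map J) := (le_perpBilin_comm hsymm).1 <|
    hJDp.trans (perpBilin_antitone (hsum ▸ le_sup_right))
  have hcompl : IsCompl Dp (perpBilin g Dp) :=
    isCompl_perpBilin hsymm (inf_perpBilin_eq_bot_of_le_perpBilin hDpD (hsum ▸ hWnd))
  refine ⟨?_, ?_, fun x hx y ⟨_, hy⟩ => ⟨?_, ?_⟩⟩
  · rw [perpBilin_comp_eq_perpBilin_map hadj, ← hsum, Submodule.map_sup, hJD, perpBilin_sup,
      perpBilin_sup, inf_right_comm, inf_comm _ (perpBilin g Dp),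
      ← sup_inf_assoc_of_le _ (le_inf hDpD hDpJDp),
      hcompl.sup_eq_top, top_inf_eq]
  · rw [eq_bot_iff, ← hWnd]
    exact inf_le_inf (hsum ▸ le_sup_right) inf_le_left
  · rw [hsymm]
    exact hy _ ⟨x, hx, rfl⟩
  · rw [hadj]
    exact hy _ ⟨x, hx, rfl⟩

/-- **Theorem 3.2, decomposition of the `g̃`-normal space.**
For a CR datum `(W, D, Dp)` one has
`W^{⊥g̃} = Dp ⊕ (W^{⊥g} ∩ (J(Dp))^{⊥g})`, a direct sum whose two summands are
`g̃`-orthogonal, where `g̃ = g ∘ J` is the associated metric. -/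
theorem cr_datum_normal_space_decomposition
    (V : Type*) [AddCommGroup V] [Module ℝ V] [FiniteDimensional ℝ V]
    (J : V →ₗ[ℝ] V) (hJ : ∀ x, J (J x) = -x)
    (g : V →ₗ[ℝ] V →ₗ[ℝ] ℝ)
    (hsymm : ∀ x y, g x y = g y x)
    (hnd : ∀ x, (∀ y, g x y = 0) → x = 0)
    (hN : ∀ x y, g (J x) (J y) = -g x y)
    (W D Dp : Submodule ℝ V)
    (hDW : D ≤ W) (hDpW : Dp ≤ W)
    (hsum : D ⊔ Dp = W) (hint : D ⊓ Dp = ⊥)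
    (horth : ∀ x ∈ D, ∀ y ∈ Dp, g x y = 0)
    (hWnd : W ⊓ perpBilin g W = ⊥)
    (hJD : Submodule.map J D = D)
    (hJDp : Submodule.map J Dp ≤ perpBilin g W) :
    perpBilin (g ∘ₗ J) W
        = Dp ⊔ (perpBilin g W ⊓ perpBilin g (Submodule.map J Dp)) ∧
    Dp ⊓ (perpBilin g W ⊓ perpBilin g (Submodule.map J Dp)) = ⊥ ∧
    (∀ x ∈ Dp, ∀ y ∈ perpBilin g W ⊓ perpBilin g (Submodule.map J Dp),
      g (J x) y = 0 ∧ g (J y) x = 0) :=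
  cr_datum_normal_space_decomposition_general V J hJ g hsymm hN W D Dp hsum horth hWnd hJD hJDp
end
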